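/- Contribution bounding yields bounded sensitivity: if a transformation retains at most k records per privacy ID, then for a subsequent counting query the resulting ℓ₁-sensitivity with respect to add/remove of one privacy ID (with all its records) is at most k, even if the original number of records per ID is unbounded. -/

import Mathlib

namespace Multiset

variable {α : Type*} (p : α → Prop) [DecidablePred p]

theorem card_filter_add_card_filter_not (s : Multiset α) :
    card (s.filter p) + card (s.filter (fun a => ¬p a)) = card s := by
  rw [← card_add, filter_add_not]

theorem abs_card_sub_card_le_of_filter_not_eq {s t : Multiset α} {k : ℕ}
    (hst : s.filter (fun a => ¬p a) = t.filter (fun a => ¬p a))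
    (hs : card (s.filter p) ≤ k) (ht : card (t.filter p) ≤ k) :
    |(card s : ℤ) - card t| ≤ k := by
  rw [← card_filter_add_card_filter_not p s, ← card_filter_add_card_filter_not p t, hst]
  push_cast
  rw [abs_sub_le_iff]
  omega

theorem filter_not_filter_not (s : Multiset α) :
    (s.filter (fun a => ¬p a)).filter (fun a => ¬p a) = s.filter (fun a => ¬p a) := by
  simp only [filter_filter, and_self]

end Multiset

theorem contribution_bounding_sensitivity_general
    {R I : Type*} [DecidableEq I]
    (pid : R → I) (k : ℕ)
    (bound : Multiset R → Multiset R)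
    -- at most k records per privacy ID are retained
    (hcount : ∀ (D : Multiset R) (i : I),
      Multiset.card ((bound D).filter (fun r => pid r = i)) ≤ k)
    -- records of other IDs are retained identically
    (hstable : ∀ (D D' : Multiset R) (i₀ : I),
      D.filter (fun r => ¬ pid r = i₀) = D'.filter (fun r => ¬ pid r = i₀) →
      (bound D).filter (fun r => ¬ pid r = i₀) =
        (bound D').filter (fun r => ¬ pid r = i₀)) :
    -- neighbors: D' is D with all records of privacy ID i₀ removed
    ∀ (D : Multiset R) (i₀ : I),
      |(Multiset.card (bound D) : ℤ) -
        Multiset.card (bound (D.filter (fun r => ¬ pid r = i₀)))| ≤ k := by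
  intro D i₀
  have hagree := hstable D _ i₀
    (Multiset.filter_not_filter_not (fun r => pid r = i₀) D).symm
  exact Multiset.abs_card_sub_card_le_of_filter_not_eq (fun r => pid r = i₀) hagree
    (hcount _ i₀) (hcount _ i₀)

/-- Contribution bounding yields bounded sensitivity: if the transformation
`bound` keeps at most k records per privacy ID, is a sub-multiset of its
input, and retains records of unaffected IDs identically (stability), then
for the counting query the ℓ₁-sensitivity w.r.t. adding/removing all records
of one privacy ID is at most k, even if the number of records per ID in the
original dataset is unbounded. -/
theorem contribution_bounding_sensitivity
    {R I : Type*} [DecidableEq I]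
    (pid : R → I) (k : ℕ)
    (bound : Multiset R → Multiset R)
    -- the transformation keeps a subset of the records
    (hsub : ∀ D : Multiset R, bound D ≤ D)
    -- at most k records per privacy ID are retained
    (hcount : ∀ (D : Multiset R) (i : I),
      Multiset.card ((bound D).filter (fun r => pid r = i)) ≤ k)
    -- records of other IDs are retained identically
    (hstable : ∀ (D D' : Multiset R) (i₀ : I),
      D.filter (fun r => ¬ pid r = i₀) = D'.filter (fun r => ¬ pid r = i₀) →
      (bound D).filter (fun r => ¬ pid r = i₀) =
        (bound D').filter (fun r => ¬ pid r = i₀)) :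
    -- neighbors: D' is D with all records of privacy ID i₀ removed
    ∀ (D : Multiset R) (i₀ : I),
      |(Multiset.card (bound D) : ℤ) -
        Multiset.card (bound (D.filter (fun r => ¬ pid r = i₀)))| ≤ k :=
  contribution_bounding_sensitivity_general pid k bound hcount hstable
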